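/- For constants a, b, k > 0 and η > 0, ∫_0^∞ exp(-(2aγ + η)²/(8aγ))·e^{-γ/b} dγ = η·(2a(a/2 + 1/b))^{-1/2}·e^{-η/2}·K₁(η·√(a/2 + 1/b)/√(2a)), where K₁ is the modified Bessel function of the second kind of order 1. -/

import Mathlib

open MeasureTheory Real Set

lemma integrable_exp_neg_cosh {x ε : ℝ} (hx : 0 < x) (hε : |ε| ≤ 1) :
    Integrable (fun t : ℝ => Real.exp (-x * Real.cosh t) * Real.exp (ε * t)) := by
  refine ((integrable_exp_neg_mul_sq (show (0:ℝ) < x/8 by positivity)).const_mul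
    (Real.exp (2/x))).mono ?_ ?_
  · exact ((Real.continuous_exp.comp (continuous_const.mul Real.continuous_cosh)).mul
      (Real.continuous_exp.comp (continuous_const.mul continuous_id))).aestronglyMeasurable
  · filter_upwards with t
    have h0 : (0:ℝ) < Real.exp (2/x) * Real.exp (-(x/8) * t^2) := by positivity
    rw [Real.norm_eq_abs, Real.norm_eq_abs, abs_of_pos (by positivity), abs_of_pos h0,
      ← Real.exp_add, ← Real.exp_add, Real.exp_le_exp]
    have h1 : 1 + |t| + |t| ^ 2 / 2 ≤ Real.exp |t| :=
      Real.quadratic_le_exp_of_nonneg (abs_nonneg t)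
    have hc : (1 + |t| + t^2/2)/2 ≤ Real.cosh t := by
      rw [← Real.cosh_abs, Real.cosh_eq]
      have := (Real.exp_pos (-|t|)).le
      have h6 : |t|^2 = t^2 := sq_abs t
      linarith
    have h3 : ε * t ≤ |t| := by
      calc ε * t ≤ |ε * t| := le_abs_self _
      _ = |ε| * |t| := abs_mul _ _
      _ ≤ 1 * |t| := by gcongr
      _ = |t| := one_mul _
    have h7 : 8 * (x * |t|) ≤ x^2 * t^2 + 16 := by
      nlinarith [sq_nonneg (x * |t| - 4), sq_abs t]
    have hP : x * (-x * Real.cosh t + ε * t) ≤ 2 - x^2 * t^2 / 8 := by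
      nlinarith [mul_le_mul_of_nonneg_left hc (sq_nonneg x),
        mul_le_mul_of_nonneg_left h3 hx.le, sq_nonneg x, sq_nonneg (x * |t|), abs_nonneg t]
    have hR : x * (2/x + (-(x/8) * t^2)) = 2 - x^2 * t^2 / 8 := by
      field_simp; ring
    have := hR ▸ hP
    exact (mul_le_mul_iff_right₀ hx).mp this

lemma cov_exp (m : ℝ) (hm : 0 < m) (g : ℝ → ℝ) :
    ∫ γ in Set.Ioi (0:ℝ), g γ = ∫ t : ℝ, (m * Real.exp t) * g (m * Real.exp t) := by
  have himg : (fun t : ℝ => m * Real.exp t) '' Set.univ = Set.Ioi 0 := by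
    rw [Set.image_univ]
    ext y
    simp only [Set.mem_range, Set.mem_Ioi]
    constructor
    · rintro ⟨t, rfl⟩; positivity
    · intro hy
      refine ⟨Real.log (y / m), ?_⟩
      rw [Real.exp_log (by positivity)]
      field_simp
  have hderiv : ∀ t ∈ Set.univ, HasDerivWithinAt (fun t : ℝ => m * Real.exp t)
      (m * Real.exp t) Set.univ t :=
    fun t _ => ((Real.hasDerivAt_exp t).const_mul m).hasDerivWithinAt
  have hinj : Set.InjOn (fun t : ℝ => m * Real.exp t) Set.univ := fun t₁ _ t₂ _ h =>
    Real.exp_injective (mul_left_cancel₀ hm.ne' h)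
  have := integral_image_eq_integral_abs_deriv_smul MeasurableSet.univ hderiv hinj g
  rw [himg, Measure.restrict_univ] at this
  rw [this]
  congr 1
  ext t
  rw [abs_of_pos (by positivity), smul_eq_mul]

/-- Modified Bessel function of the second kind of order 1,
via the integral representation K₁(x) = ∫_0^∞ exp(-x cosh t) cosh t dt. -/
noncomputable def besselK1 (x : ℝ) : ℝ :=
  ∫ t in Set.Ioi (0:ℝ), Real.exp (-x * Real.cosh t) * Real.cosh t

lemma core {β c m x : ℝ} (hm : 0 < m) (hx : 0 < x)
    (hβm : β * m = x / 2) (hcm : c / m = x / 2) :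
    ∫ γ in Set.Ioi (0:ℝ), Real.exp (-(β * γ + c / γ)) = 2 * m * besselK1 x := by
  rw [cov_exp m hm (fun γ => Real.exp (-(β * γ + c / γ)))]
  have key : (fun t : ℝ =>
      (m * Real.exp t) * Real.exp (-(β * (m * Real.exp t) + c / (m * Real.exp t))))
      = fun t : ℝ => m * (Real.exp (-x * Real.cosh t) * Real.exp (1 * t)) := by
    funext t
    have het : Real.exp t ≠ 0 := (Real.exp_pos t).ne'
    have harg : β * (m * Real.exp t) + c / (m * Real.exp t) = x * Real.cosh t := by
      have h1 : c / (m * Real.exp t) = (c / m) * Real.exp (-t) := by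
        rw [Real.exp_neg]
        field_simp
      rw [h1, hcm, Real.cosh_eq,
        show β * (m * Real.exp t) = (β * m) * Real.exp t by ring, hβm]
      ring
    rw [harg]
    ring
  rw [key, integral_const_mul]
  have hF : Integrable (fun t : ℝ => Real.exp (-x * Real.cosh t) * Real.exp (1 * t)) :=
    integrable_exp_neg_cosh hx (by norm_num)
  have hFneg : Integrable (fun t : ℝ =>
      Real.exp (-x * Real.cosh (-t)) * Real.exp (1 * (-t))) := hF.comp_neg
  have hsymm : (∫ t : ℝ, Real.exp (-x * Real.cosh t) * Real.exp (1 * t))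
      = ∫ t : ℝ, Real.exp (-x * Real.cosh t) * Real.cosh t := by
    have havg : (fun t : ℝ => Real.exp (-x * Real.cosh t) * Real.cosh t)
        = fun t : ℝ => (Real.exp (-x * Real.cosh t) * Real.exp (1 * t)
            + Real.exp (-x * Real.cosh (-t)) * Real.exp (1 * (-t))) / 2 := by
      funext t
      rw [Real.cosh_neg, Real.cosh_eq]
      ring_nf
    rw [havg, integral_div, integral_add hF hFneg,
      integral_neg_eq_self (fun t : ℝ => Real.exp (-x * Real.cosh t) * Real.exp (1 * t)) volume]
    ring
  rw [hsymm]
  have hfold : (∫ t : ℝ, Real.exp (-x * Real.cosh t) * Real.cosh t) = 2 * besselK1 x := by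
    rw [besselK1, ← integral_comp_abs (f := fun u => Real.exp (-x * Real.cosh u) * Real.cosh u)]
    congr 1
    funext t
    rw [Real.cosh_abs]
  rw [hfold]
  ring

theorem stmt_15 (a b η : ℝ) (ha : 0 < a) (hb : 0 < b) (hη : 0 < η) :
    ∫ γ in Set.Ioi (0:ℝ),
        Real.exp (-(2 * a * γ + η) ^ 2 / (8 * a * γ)) * Real.exp (-γ / b)
      = η * (2 * a * (a / 2 + 1 / b)) ^ (-(1:ℝ)/2) * Real.exp (-η / 2) *
          besselK1 (η * Real.sqrt (a / 2 + 1 / b) / Real.sqrt (2 * a)) := by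
  have hβpos : (0:ℝ) < a / 2 + 1 / b := by positivity
  have hsβ : (0:ℝ) < Real.sqrt (a / 2 + 1 / b) := Real.sqrt_pos.mpr hβpos
  have hs2a : (0:ℝ) < Real.sqrt (2 * a) := Real.sqrt_pos.mpr (by positivity)
  have hβ : Real.sqrt (a / 2 + 1 / b) ^ 2 = a / 2 + 1 / b := Real.sq_sqrt hβpos.le
  have h2a : Real.sqrt (2 * a) ^ 2 = 2 * a := Real.sq_sqrt (by positivity)
  have hm : (0:ℝ) < η / (2 * Real.sqrt (2 * a) * Real.sqrt (a / 2 + 1 / b)) := by positivity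
  have hx : (0:ℝ) < η * Real.sqrt (a / 2 + 1 / b) / Real.sqrt (2 * a) := by positivity
  have step1 : ∫ γ in Set.Ioi (0:ℝ),
      Real.exp (-(2 * a * γ + η) ^ 2 / (8 * a * γ)) * Real.exp (-γ / b)
      = ∫ γ in Set.Ioi (0:ℝ), Real.exp (-η / 2) *
          Real.exp (-((a / 2 + 1 / b) * γ + (η ^ 2 / (8 * a)) / γ)) := by
    refine setIntegral_congr_fun measurableSet_Ioi (fun γ hγ => ?_)
    have hγ0 : (0:ℝ) < γ := hγ
    rw [← Real.exp_add, ← Real.exp_add]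
    congr 1
    field_simp
    ring
  rw [step1, integral_const_mul]
  have halg : ∀ u v : ℝ, 0 < u → 0 < v → u ^ 2 = a / 2 + 1 / b → v ^ 2 = 2 * a →
      ((a / 2 + 1 / b) * (η / (2 * v * u)) = (η * u / v) / 2 ∧
       (η ^ 2 / (8 * a)) / (η / (2 * v * u)) = (η * u / v) / 2) := by
    intro u v hu hv h1 h2
    constructor
    · rw [← h1]; field_simp
    · rw [show (8 : ℝ) * a = 4 * v ^ 2 by rw [h2]; ring]; field_simp; ring
  obtain ⟨hβm, hcm⟩ := halg _ _ hsβ hs2a hβ h2a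
  rw [core hm hx hβm hcm]
  have hrpow : (2 * a * (a / 2 + 1 / b) : ℝ) ^ (-(1:ℝ)/2)
      = (Real.sqrt (2 * a) * Real.sqrt (a / 2 + 1 / b))⁻¹ := by
    rw [show (-(1:ℝ)/2) = -(1/2) by ring, Real.rpow_neg (by positivity),
      ← Real.sqrt_eq_rpow, Real.sqrt_mul (by positivity)]
  rw [hrpow]
  have hfin : ∀ u v K E : ℝ, 0 < u → 0 < v →
      E * (2 * (η / (2 * v * u)) * K) = η * (v * u)⁻¹ * E * K := by
    intro u v K E hu hv
    field_simp
  exact hfin _ _ _ _ hsβ hs2a
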